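/- Let u : ℝ³ → ℝ be twice continuously differentiable in (x,y,t) satisfying u_{xt} + u_x u_{yy} − u_y u_{xy} = 0 at every point, with u_x nowhere vanishing. Then the following four conservation laws hold at every point: (1) ∂_y(u_y/u_x) − ∂_t(1/u_x) = 0; (2) ∂_x(−u_y²) + ∂_y(u_x u_y) + ∂_t(u_x) = 0; (3) ∂_x(−u_t² + 2 u_t u_y² − u_y⁴) + ∂_y(−2 u_x u_y u_t + u_x u_y³) + ∂_t(u_x u_y²) = 0; (4) ∂_x(u_t u_y − u_y³) + ∂_y(−u_x u_t + u_x u_y²) + ∂_t(u_x u_y) = 0. -/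

import Mathlib

/-!
Only two facts about the gradient `(a, b, c) = (u_x, u_y, u_t)` are needed: its Jacobian is
symmetric (Clairaut), and `a_t + a b_y - b a_y = 0`. Expanding each flux by the product rule and
using the symmetry, the divergence becomes `(a_t + a b_y - b a_y) / a²` for the first law, and
`1`, `3 b² - 2 c`, `2 b` times `a_t + a b_y - b a_y` for the other three.
-/

/-- Partial derivative with respect to the first variable `x`. -/
noncomputable def pdx (f : ℝ × ℝ × ℝ → ℝ) (p : ℝ × ℝ × ℝ) : ℝ :=
  deriv (fun s => f (s, p.2.1, p.2.2)) p.1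

/-- Partial derivative with respect to the second variable `y`. -/
noncomputable def pdy (f : ℝ × ℝ × ℝ → ℝ) (p : ℝ × ℝ × ℝ) : ℝ :=
  deriv (fun s => f (p.1, s, p.2.2)) p.2.1

/-- Partial derivative with respect to the third variable `t`. -/
noncomputable def pdt (f : ℝ × ℝ × ℝ → ℝ) (p : ℝ × ℝ × ℝ) : ℝ :=
  deriv (fun s => f (p.1, p.2.1, s)) p.2.2

section Clairaut

variable {E F : Type*} [NormedAddCommGroup E] [NormedSpace ℝ E]
  [NormedAddCommGroup F] [NormedSpace ℝ F] {u : E → F}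

theorem ContDiff.differentiable_fderiv_apply (hu : ContDiff ℝ 2 u) (v : E) :
    Differentiable ℝ fun x => fderiv ℝ u x v :=
  ((hu.fderiv_right (m := 1) le_rfl).differentiable one_ne_zero).clm_apply
    (differentiable_const v)

theorem ContDiffAt.fderiv_fderiv_apply_comm {x : E} (hu : ContDiffAt ℝ 2 u x) (v w : E) :
    fderiv ℝ (fun y => fderiv ℝ u y v) x w = fderiv ℝ (fun y => fderiv ℝ u y w) x v := by
  have hdu : DifferentiableAt ℝ (fderiv ℝ u) x :=
    (hu.fderiv_right (m := 1) le_rfl).differentiableAt one_ne_zero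
  simp only [fderiv_clm_apply hdu (differentiableAt_const _), fderiv_fun_const, Pi.zero_apply,
    ContinuousLinearMap.comp_zero, zero_add, ContinuousLinearMap.flip_apply]
  exact hu.isSymmSndFDerivAt (by simp) w v

end Clairaut

section Partials

variable {f : ℝ × ℝ × ℝ → ℝ} {p : ℝ × ℝ × ℝ}

theorem hasDerivAt_slice_x (hf : DifferentiableAt ℝ f p) :
    HasDerivAt (fun s => f (s, p.2.1, p.2.2)) (fderiv ℝ f p (1, 0, 0)) p.1 :=
  hf.hasFDerivAt.comp_hasDerivAt p.1
    ((hasDerivAt_id _).prodMk ((hasDerivAt_const _ _).prodMk (hasDerivAt_const _ _)))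

theorem hasDerivAt_slice_y (hf : DifferentiableAt ℝ f p) :
    HasDerivAt (fun s => f (p.1, s, p.2.2)) (fderiv ℝ f p (0, 1, 0)) p.2.1 :=
  hf.hasFDerivAt.comp_hasDerivAt p.2.1
    ((hasDerivAt_const _ _).prodMk ((hasDerivAt_id _).prodMk (hasDerivAt_const _ _)))

theorem hasDerivAt_slice_t (hf : DifferentiableAt ℝ f p) :
    HasDerivAt (fun s => f (p.1, p.2.1, s)) (fderiv ℝ f p (0, 0, 1)) p.2.2 :=
  hf.hasFDerivAt.comp_hasDerivAt p.2.2
    ((hasDerivAt_const _ _).prodMk ((hasDerivAt_const _ _).prodMk (hasDerivAt_id _)))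

theorem DifferentiableAt.pdx_eq_fderiv (hf : DifferentiableAt ℝ f p) :
    pdx f p = fderiv ℝ f p (1, 0, 0) :=
  (hasDerivAt_slice_x hf).deriv

theorem DifferentiableAt.pdy_eq_fderiv (hf : DifferentiableAt ℝ f p) :
    pdy f p = fderiv ℝ f p (0, 1, 0) :=
  (hasDerivAt_slice_y hf).deriv

theorem DifferentiableAt.pdt_eq_fderiv (hf : DifferentiableAt ℝ f p) :
    pdt f p = fderiv ℝ f p (0, 0, 1) :=
  (hasDerivAt_slice_t hf).deriv

theorem DifferentiableAt.hasDerivAt_pdx (hf : DifferentiableAt ℝ f p) :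
    HasDerivAt (fun s => f (s, p.2.1, p.2.2)) (pdx f p) p.1 :=
  (hasDerivAt_slice_x hf).differentiableAt.hasDerivAt

theorem DifferentiableAt.hasDerivAt_pdy (hf : DifferentiableAt ℝ f p) :
    HasDerivAt (fun s => f (p.1, s, p.2.2)) (pdy f p) p.2.1 :=
  (hasDerivAt_slice_y hf).differentiableAt.hasDerivAt

theorem DifferentiableAt.hasDerivAt_pdt (hf : DifferentiableAt ℝ f p) :
    HasDerivAt (fun s => f (p.1, p.2.1, s)) (pdt f p) p.2.2 :=
  (hasDerivAt_slice_t hf).differentiableAt.hasDerivAt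

end Partials

section SecondPartials

variable {u : ℝ × ℝ × ℝ → ℝ}

theorem Differentiable.pdx_eq_fderiv (hu : Differentiable ℝ u) :
    pdx u = fun q => fderiv ℝ u q (1, 0, 0) :=
  funext fun q => (hu q).pdx_eq_fderiv

theorem Differentiable.pdy_eq_fderiv (hu : Differentiable ℝ u) :
    pdy u = fun q => fderiv ℝ u q (0, 1, 0) :=
  funext fun q => (hu q).pdy_eq_fderiv

theorem Differentiable.pdt_eq_fderiv (hu : Differentiable ℝ u) :
    pdt u = fun q => fderiv ℝ u q (0, 0, 1) :=
  funext fun q => (hu q).pdt_eq_fderiv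

theorem ContDiff.differentiable_pdx (hu : ContDiff ℝ 2 u) : Differentiable ℝ (pdx u) := by
  rw [(hu.differentiable two_ne_zero).pdx_eq_fderiv]
  exact hu.differentiable_fderiv_apply _

theorem ContDiff.differentiable_pdy (hu : ContDiff ℝ 2 u) : Differentiable ℝ (pdy u) := by
  rw [(hu.differentiable two_ne_zero).pdy_eq_fderiv]
  exact hu.differentiable_fderiv_apply _

theorem ContDiff.differentiable_pdt (hu : ContDiff ℝ 2 u) : Differentiable ℝ (pdt u) := by
  rw [(hu.differentiable two_ne_zero).pdt_eq_fderiv]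
  exact hu.differentiable_fderiv_apply _

theorem ContDiff.pdx_pdy_comm (hu : ContDiff ℝ 2 u) (p : ℝ × ℝ × ℝ) :
    pdx (pdy u) p = pdy (pdx u) p := by
  rw [(hu.differentiable_pdy p).pdx_eq_fderiv, (hu.differentiable_pdx p).pdy_eq_fderiv,
    (hu.differentiable two_ne_zero).pdx_eq_fderiv, (hu.differentiable two_ne_zero).pdy_eq_fderiv]
  exact hu.contDiffAt.fderiv_fderiv_apply_comm _ _

theorem ContDiff.pdx_pdt_comm (hu : ContDiff ℝ 2 u) (p : ℝ × ℝ × ℝ) :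
    pdx (pdt u) p = pdt (pdx u) p := by
  rw [(hu.differentiable_pdt p).pdx_eq_fderiv, (hu.differentiable_pdx p).pdt_eq_fderiv,
    (hu.differentiable two_ne_zero).pdx_eq_fderiv, (hu.differentiable two_ne_zero).pdt_eq_fderiv]
  exact hu.contDiffAt.fderiv_fderiv_apply_comm _ _

theorem ContDiff.pdy_pdt_comm (hu : ContDiff ℝ 2 u) (p : ℝ × ℝ × ℝ) :
    pdy (pdt u) p = pdt (pdy u) p := by
  rw [(hu.differentiable_pdt p).pdy_eq_fderiv, (hu.differentiable_pdy p).pdt_eq_fderiv,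
    (hu.differentiable two_ne_zero).pdy_eq_fderiv, (hu.differentiable two_ne_zero).pdt_eq_fderiv]
  exact hu.contDiffAt.fderiv_fderiv_apply_comm _ _

end SecondPartials

section ConservationLaws

variable {a b c : ℝ × ℝ × ℝ → ℝ} {p : ℝ × ℝ × ℝ}

theorem conservation_law₁ (ha : DifferentiableAt ℝ a p) (hb : DifferentiableAt ℝ b p)
    (ha₀ : a p ≠ 0) (heq : pdt a p + a p * pdy b p - b p * pdy a p = 0) :
    pdy (fun q => b q / a q) p - pdt (fun q => 1 / a q) p = 0 := by
  have hFy := hb.hasDerivAt_pdy.fun_div ha.hasDerivAt_pdy ha₀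
  have hFt := (hasDerivAt_const _ 1).fun_div ha.hasDerivAt_pdt ha₀
  rw [pdy, pdt, hFy.deriv, hFt.deriv]
  field_simp
  linear_combination heq

theorem conservation_law₂ (ha : DifferentiableAt ℝ a p) (hb : DifferentiableAt ℝ b p)
    (hab : pdx b p = pdy a p) (heq : pdt a p + a p * pdy b p - b p * pdy a p = 0) :
    pdx (fun q => -b q ^ 2) p + pdy (fun q => a q * b q) p + pdt a p = 0 := by
  have hFx := (hb.hasDerivAt_pdx.fun_pow 2).fun_neg
  have hFy := ha.hasDerivAt_pdy.fun_mul hb.hasDerivAt_pdy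
  rw [pdx, pdy, hFx.deriv, hFy.deriv, hab]
  linear_combination heq

theorem conservation_law₃ (ha : DifferentiableAt ℝ a p) (hb : DifferentiableAt ℝ b p)
    (hc : DifferentiableAt ℝ c p) (hab : pdx b p = pdy a p) (hac : pdx c p = pdt a p)
    (hbc : pdy c p = pdt b p) (heq : pdt a p + a p * pdy b p - b p * pdy a p = 0) :
    pdx (fun q => -c q ^ 2 + 2 * c q * b q ^ 2 - b q ^ 4) p
      + pdy (fun q => -(2 * a q * b q * c q) + a q * b q ^ 3) p
      + pdt (fun q => a q * b q ^ 2) p = 0 := by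
  have hFx := ((hc.hasDerivAt_pdx.fun_pow 2).fun_neg.fun_add
    ((hc.hasDerivAt_pdx.const_mul 2).fun_mul (hb.hasDerivAt_pdx.fun_pow 2))).fun_sub
    (hb.hasDerivAt_pdx.fun_pow 4)
  have hFy := (((ha.hasDerivAt_pdy.const_mul 2).fun_mul hb.hasDerivAt_pdy).fun_mul
    hc.hasDerivAt_pdy).fun_neg.fun_add (ha.hasDerivAt_pdy.fun_mul (hb.hasDerivAt_pdy.fun_pow 3))
  have hFt := ha.hasDerivAt_pdt.fun_mul (hb.hasDerivAt_pdt.fun_pow 2)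
  rw [pdx, pdy, pdt, hFx.deriv, hFy.deriv, hFt.deriv, hab, hac, hbc]
  linear_combination (3 * b p ^ 2 - 2 * c p) * heq

theorem conservation_law₄ (ha : DifferentiableAt ℝ a p) (hb : DifferentiableAt ℝ b p)
    (hc : DifferentiableAt ℝ c p) (hab : pdx b p = pdy a p) (hac : pdx c p = pdt a p)
    (hbc : pdy c p = pdt b p) (heq : pdt a p + a p * pdy b p - b p * pdy a p = 0) :
    pdx (fun q => c q * b q - b q ^ 3) p + pdy (fun q => -(a q * c q) + a q * b q ^ 2) p
      + pdt (fun q => a q * b q) p = 0 := by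
  have hFx := (hc.hasDerivAt_pdx.fun_mul hb.hasDerivAt_pdx).fun_sub (hb.hasDerivAt_pdx.fun_pow 3)
  have hFy := (ha.hasDerivAt_pdy.fun_mul hc.hasDerivAt_pdy).fun_neg.fun_add
    (ha.hasDerivAt_pdy.fun_mul (hb.hasDerivAt_pdy.fun_pow 2))
  have hFt := ha.hasDerivAt_pdt.fun_mul hb.hasDerivAt_pdt
  rw [pdx, pdy, pdt, hFx.deriv, hFy.deriv, hFt.deriv, hab, hac, hbc]
  linear_combination 2 * b p * heq

end ConservationLaws

/-- The four first-order conservation laws of the equation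
`u_{xt} + u_x u_{yy} - u_y u_{xy} = 0`. -/
theorem equation5_conservation_laws
    (u : ℝ × ℝ × ℝ → ℝ) (hu : ContDiff ℝ 2 u)
    (heq : ∀ p : ℝ × ℝ × ℝ,
      pdt (pdx u) p + pdx u p * pdy (pdy u) p - pdy u p * pdy (pdx u) p = 0)
    (hx : ∀ p : ℝ × ℝ × ℝ, pdx u p ≠ 0) :
    (∀ p : ℝ × ℝ × ℝ,
      pdy (fun q => pdy u q / pdx u q) p - pdt (fun q => 1 / pdx u q) p = 0) ∧
    (∀ p : ℝ × ℝ × ℝ,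
      pdx (fun q => -(pdy u q) ^ 2) p + pdy (fun q => pdx u q * pdy u q) p
        + pdt (fun q => pdx u q) p = 0) ∧
    (∀ p : ℝ × ℝ × ℝ,
      pdx (fun q => -(pdt u q) ^ 2 + 2 * pdt u q * (pdy u q) ^ 2 - (pdy u q) ^ 4) p
        + pdy (fun q => -(2 * pdx u q * pdy u q * pdt u q) + pdx u q * (pdy u q) ^ 3) p
        + pdt (fun q => pdx u q * (pdy u q) ^ 2) p = 0) ∧
    (∀ p : ℝ × ℝ × ℝ,
      pdx (fun q => pdt u q * pdy u q - (pdy u q) ^ 3) p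
        + pdy (fun q => -(pdx u q * pdt u q) + pdx u q * (pdy u q) ^ 2) p
        + pdt (fun q => pdx u q * pdy u q) p = 0) := by
  have ha := hu.differentiable_pdx
  have hb := hu.differentiable_pdy
  have hc := hu.differentiable_pdt
  refine ⟨fun p => conservation_law₁ (ha p) (hb p) (hx p) (heq p),
    fun p => conservation_law₂ (ha p) (hb p) (hu.pdx_pdy_comm p) (heq p),
    fun p => conservation_law₃ (ha p) (hb p) (hc p) (hu.pdx_pdy_comm p) (hu.pdx_pdt_comm p)
      (hu.pdy_pdt_comm p) (heq p),
    fun p => conservation_law₄ (ha p) (hb p) (hc p) (hu.pdx_pdy_comm p) (hu.pdx_pdt_comm p)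
      (hu.pdy_pdt_comm p) (heq p)⟩
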